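/- Let C be a nonzero binary linear code of minimum distance d(C) ≤ 2. Then for every parity-check matrix H of C, w_AWGNC^min(H) = w_BSC^min(H) = w_maxfrac^min(H) = d(C). -/
import Mathlib


open Matrix BigOperators Finset

section Defs

variable {J I : Type*} [Fintype J] [Fintype I] [DecidableEq I]

/-- The support of row `j` of a binary matrix `H`. -/
def rowSupp (H : Matrix J I (ZMod 2)) (j : J) : Finset I :=
  Finset.univ.filter fun i => H j i = 1

/-- The fundamental cone of a binary matrix `H`. -/
def fundCone (H : Matrix J I (ZMod 2)) : Set (I → ℝ) :=
  {x | (∀ i, 0 ≤ x i) ∧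
    ∀ j : J, ∀ ℓ ∈ rowSupp H j, x ℓ ≤ ∑ i ∈ (rowSupp H j).erase ℓ, x i}

/-- BEC pseudoweight: size of the support. -/
noncomputable def wBEC (x : I → ℝ) : ℝ := ({i | x i ≠ 0}.ncard : ℝ)

/-- AWGNC pseudoweight. -/
noncomputable def wAWGNC (x : I → ℝ) : ℝ := (∑ i, x i) ^ 2 / ∑ i, x i ^ 2

/-- Max-fractional weight. -/
noncomputable def wMaxFrac (x : I → ℝ) : ℝ := (∑ i, x i) / sSup (Set.range x)

/-- `H` is a parity-check matrix of the code `C`. -/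
def IsParityCheck (H : Matrix J I (ZMod 2)) (C : Submodule (ZMod 2) (I → ZMod 2)) : Prop :=
  ∀ c, c ∈ C ↔ H.mulVec c = 0

/-- Minimum Hamming distance of a code. -/
noncomputable def minDist (C : Submodule (ZMod 2) (I → ZMod 2)) : ℕ :=
  sInf {d | ∃ c ∈ C, c ≠ 0 ∧ hammingNorm c = d}

/-- Minimum pseudoweight of `H` w.r.t. pseudoweight function `w`:
the infimum of `w` over all nonzero pseudocodewords (`⊤` if there are none). -/
noncomputable def minPW (w : (I → ℝ) → ℝ) (H : Matrix J I (ZMod 2)) : EReal :=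
  sInf ((fun x => (w x : EReal)) '' (fundCone H \ {0}))

/-- The chain (connectivity) relation associated with a binary matrix whose rows
have weight 2: `i` and `i'` are related iff they are equal or joined by a chain of rows
whose supports are exactly consecutive pairs. -/
def chainRel (H : Matrix J I (ZMod 2)) (i i' : I) : Prop :=
  i = i' ∨ ∃ ℓ : ℕ, 1 ≤ ℓ ∧ ∃ (c : Fin (ℓ + 1) → I) (r : Fin ℓ → J),
    c 0 = i ∧ c (Fin.last ℓ) = i' ∧
    ∀ t : Fin ℓ, rowSupp H (r t) = {c t.castSucc, c t.succ}

/-- The 0-1 real matrix associated with a binary matrix. -/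
def toRealMatrix (H : Matrix J I (ZMod 2)) : Matrix J I ℝ :=
  Matrix.of fun j i => if H j i = 1 then (1 : ℝ) else 0

/-- The Tanner graph of a binary matrix. -/
def tannerGraph (H : Matrix J I (ZMod 2)) : SimpleGraph (J ⊕ I) :=
  SimpleGraph.fromRel fun u v => ∃ j i, u = Sum.inl j ∧ v = Sum.inr i ∧ H j i = 1

end Defs

/-- The multiset of (real) eigenvalues, with multiplicity, of a real square matrix:
the real roots of its characteristic polynomial. -/
noncomputable def eigMult {ι : Type*} [Fintype ι] [DecidableEq ι] (A : Matrix ι ι ℝ) :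
    Multiset ℝ :=
  A.charpoly.roots

section FinDefs

variable {n : ℕ}

/-- The non-increasing rearrangement of a real vector. -/
noncomputable def sortDesc (x : Fin n → ℝ) : Fin n → ℝ :=
  fun i => x (Tuple.sort (fun j => -x j) i)

/-- `Φ(ξ) = ∫₀^ξ φ`, where `φ(ξ) = x'_i` for `i - 1 < ξ ≤ i` and `x'` is the
non-increasing rearrangement of `x`. -/
noncomputable def bigPhi (x : Fin n → ℝ) (ξ : ℝ) : ℝ :=
  ∑ i : Fin n, sortDesc x i * min 1 (max 0 (ξ - (i : ℝ)))

/-- BSC pseudoweight: `2 Φ⁻¹(Φ(n)/2)`. -/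
noncomputable def wBSC (x : Fin n → ℝ) : ℝ :=
  2 * sInf {ξ : ℝ | bigPhi x (n : ℝ) / 2 ≤ bigPhi x ξ}

/-- The pseudocodeword redundancy of a code `C` w.r.t. the pseudoweight function `w`:
the smallest number of rows of a parity-check matrix `H` of `C` whose minimum
pseudoweight equals the minimum distance of `C` (`⊤` if there is no such matrix). -/
noncomputable def pcRedundancy (w : (Fin n → ℝ) → ℝ)
    (C : Submodule (ZMod 2) (Fin n → ZMod 2)) : ℕ∞ :=
  sInf {k : ℕ∞ | ∃ (m : ℕ) (H : Matrix (Fin m) (Fin n) (ZMod 2)),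
    k = (m : ℕ∞) ∧ IsParityCheck H C ∧ minPW w H = ((minDist C : ℝ) : EReal)}

end FinDefs


lemma zmod2_cases (a : ZMod 2) : a = 0 ∨ a = 1 := by revert a; decide

lemma clamp_eq (ξ : ℝ) (hξ : 0 ≤ ξ) (i : ℕ) :
    min 1 (max 0 (ξ - (i:ℝ))) = min ξ ((i:ℝ)+1) - min ξ (i:ℝ) := by
  rw [min_def, max_def, min_def, min_def]
  split_ifs <;> linarith

lemma clamp_nonneg (ξ a : ℝ) : 0 ≤ min 1 (max 0 (ξ - a)) :=
  le_min (by norm_num) (le_max_left _ _)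

lemma clamp_sum_le (N : ℕ) (ξ : ℝ) (hξ : 0 ≤ ξ) :
    ∑ i : Fin N, min 1 (max 0 (ξ - (i : ℝ))) ≤ ξ := by
  have h1 : ∑ i : Fin N, min 1 (max 0 (ξ - (i : ℝ)))
      = ∑ i ∈ Finset.range N, ((fun k : ℕ => min ξ (k:ℝ)) (i+1) - (fun k : ℕ => min ξ (k:ℝ)) i) := by
    rw [Fin.sum_univ_eq_sum_range (fun i => min 1 (max 0 (ξ - (i : ℝ))))]
    refine Finset.sum_congr rfl fun i _ => ?_
    simpa [Nat.cast_add] using clamp_eq ξ hξ i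
  rw [h1, Finset.sum_range_sub (fun k : ℕ => min ξ (k:ℝ))]
  simp [hξ]

lemma sortDesc_antitone {n : ℕ} (x : Fin n → ℝ) : Antitone (sortDesc x) := by
  intro a b hab
  have h := Tuple.monotone_sort (fun j => -x j) hab
  simp only [Function.comp_apply] at h
  simp only [sortDesc]
  linarith

lemma sum_sortDesc {n : ℕ} (x : Fin n → ℝ) : ∑ i, sortDesc x i = ∑ i, x i := by
  simpa [sortDesc] using Equiv.sum_comp (Tuple.sort (fun j => -x j)) x

lemma bigPhi_n {n : ℕ} (x : Fin n → ℝ) : bigPhi x (n:ℝ) = ∑ i, x i := by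
  rw [← sum_sortDesc]
  refine Finset.sum_congr rfl fun i _ => ?_
  have hi : (i:ℝ) + 1 ≤ (n:ℝ) := by exact_mod_cast i.2
  have h1 : min 1 (max 0 ((n:ℝ) - (i:ℝ))) = 1 := by
    rw [max_eq_right (by linarith), min_eq_left (by linarith)]
  rw [h1, mul_one]

lemma bigPhi_nonpos {n : ℕ} (x : Fin n → ℝ) (ξ : ℝ) (hξ : ξ ≤ 0) : bigPhi x ξ = 0 := by
  refine Finset.sum_eq_zero fun i _ => ?_
  have h0 : (0:ℝ) ≤ (i:ℝ) := Nat.cast_nonneg _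
  rw [max_eq_left (by linarith), min_eq_right (by norm_num), mul_zero]

lemma bigPhi_le {n : ℕ} (x : Fin n → ℝ) (M : ℝ) (hMpos : 0 ≤ M)
    (hM : ∀ i, x i ≤ M) (ξ : ℝ) (hξ : 0 ≤ ξ) : bigPhi x ξ ≤ M * ξ := by
  have step : bigPhi x ξ ≤ ∑ i : Fin n, M * min 1 (max 0 (ξ - (i:ℝ))) := by
    refine Finset.sum_le_sum fun i _ => ?_
    exact mul_le_mul_of_nonneg_right (hM _) (clamp_nonneg _ _)
  calc bigPhi x ξ ≤ _ := step
    _ = M * ∑ i : Fin n, min 1 (max 0 (ξ - (i:ℝ))) := by rw [Finset.mul_sum]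
    _ ≤ M * ξ := mul_le_mul_of_nonneg_left (clamp_sum_le n ξ hξ) hMpos

lemma bsc_lb {n : ℕ} (x : Fin n → ℝ) (M : ℝ)
    (hM : ∀ i, x i ≤ M) (hMpos : 0 < M) (hs : 0 < ∑ i, x i) :
    (∑ i, x i) / (2 * M) ∈ lowerBounds {ξ : ℝ | bigPhi x (n : ℝ) / 2 ≤ bigPhi x ξ} := by
  intro ξ hξ
  simp only [Set.mem_setOf_eq, bigPhi_n] at hξ
  rcases le_or_gt ξ 0 with h | h
  · rw [bigPhi_nonpos x ξ h] at hξ; linarith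
  · have hb := bigPhi_le x M hMpos.le hM ξ h.le
    rw [div_le_iff₀ (by positivity)]
    nlinarith

lemma bsc_ge {n : ℕ} (x : Fin n → ℝ) (M : ℝ)
    (hM : ∀ i, x i ≤ M) (hMpos : 0 < M) (hs : 0 < ∑ i, x i) :
    (∑ i, x i) / M ≤ wBSC x := by
  have hne : ((n:ℝ)) ∈ {ξ : ℝ | bigPhi x (n : ℝ) / 2 ≤ bigPhi x ξ} := by
    simp only [Set.mem_setOf_eq]; rw [bigPhi_n]; linarith
  have h := le_csInf ⟨_, hne⟩ (bsc_lb x M hM hMpos hs)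
  unfold wBSC
  have e : (∑ i, x i)/M = 2 * ((∑ i, x i)/(2*M)) := by field_simp
  rw [e]; linarith

/-- For a nonzero binary linear code `C` of minimum distance at most 2,
every parity-check matrix `H` of `C` satisfies
`w_AWGNC^min(H) = w_BSC^min(H) = w_maxfrac^min(H) = d(C)`. -/
theorem statement3 {m n : ℕ} (C : Submodule (ZMod 2) (Fin n → ZMod 2)) (hC : C ≠ ⊥)
    (hd : minDist C ≤ 2) (H : Matrix (Fin m) (Fin n) (ZMod 2)) (hH : IsParityCheck H C) :
    minPW wAWGNC H = ((minDist C : ℝ) : EReal) ∧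
    minPW wBSC H = ((minDist C : ℝ) : EReal) ∧
    minPW wMaxFrac H = ((minDist C : ℝ) : EReal) := by
  classical
  set d := minDist C with hdd
  obtain ⟨c0, hc0C, hc00⟩ := (Submodule.ne_bot_iff C).mp hC
  have hSne : {k | ∃ c ∈ C, c ≠ 0 ∧ hammingNorm c = k}.Nonempty :=
    ⟨hammingNorm c0, c0, hc0C, hc00, rfl⟩
  obtain ⟨c, hcC, hc0, hcw⟩ := Nat.sInf_mem hSne
  have hdS : d = sInf {k | ∃ c ∈ C, c ≠ 0 ∧ hammingNorm c = k} := rfl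
  rw [← hdS] at hcw
  have hd1 : 1 ≤ d := by
    by_contra hcon
    have : d = 0 := by omega
    rw [this] at hcw
    exact hc0 (hammingNorm_eq_zero.mp hcw)
  have dpos : (0:ℝ) < (d:ℝ) := by exact_mod_cast hd1
  obtain ⟨i0, hi0⟩ := Function.ne_iff.mp hc0
  have hci0 : c i0 = 1 := by rcases zmod2_cases (c i0) with h|h; exact absurd h hi0; exact h
  set x : Fin n → ℝ := fun i => if c i = 1 then 1 else 0 with hxdef
  have hx0 : ∀ i, 0 ≤ x i := fun i => by simp only [hxdef]; split_ifs <;> norm_num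
  have hx1 : ∀ i, x i ≤ 1 := fun i => by simp only [hxdef]; split_ifs <;> norm_num
  have hxi0 : x i0 = 1 := by simp [hxdef, hci0]
  have hxne : x ≠ 0 := Function.ne_iff.mpr ⟨i0, by rw [hxi0]; norm_num⟩
  have hfilter : (Finset.univ.filter fun i => c i = 1) = (Finset.univ.filter fun i => c i ≠ 0) :=
    Finset.filter_congr fun i _ => by rcases zmod2_cases (c i) with h|h <;> simp [h]
  have hxsum : ∑ i, x i = (d:ℝ) := by
    have h1 : ∑ i, x i = ((Finset.univ.filter fun i => c i = 1).card : ℝ) := by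
      simp [hxdef, Finset.sum_boole]
    rw [h1, hfilter]
    norm_cast
  have hxsq : ∑ i, x i ^ 2 = (d:ℝ) := by
    rw [← hxsum]
    refine Finset.sum_congr rfl fun i _ => ?_
    simp only [hxdef]; split_ifs <;> norm_num
  have hcone : x ∈ fundCone H := by
    constructor
    · exact hx0
    · intro j ℓ hℓ
      by_cases hcl : c ℓ = 1
      · have hrow : ∑ i ∈ rowSupp H j, c i = 0 := by
          have h0 : H.mulVec c = 0 := (hH c).mp hcC
          have h1 := congrFun h0 j
          simp only [Matrix.mulVec, dotProduct, Pi.zero_apply] at h1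
          rw [← h1, rowSupp, Finset.sum_filter]
          refine Finset.sum_congr rfl fun i _ => ?_
          rcases zmod2_cases (H j i) with h|h <;> simp [h]
        have herase : ∑ i ∈ (rowSupp H j).erase ℓ, c i = 1 := by
          have h2 := Finset.sum_erase_add (rowSupp H j) c hℓ
          rw [hrow, hcl] at h2
          rcases zmod2_cases (∑ i ∈ (rowSupp H j).erase ℓ, c i) with h|h
          · rw [h] at h2; simp at h2
          · exact h
        obtain ⟨ℓ', hℓ'mem, hℓ'⟩ := Finset.exists_ne_zero_of_sum_ne_zero
          (by rw [herase]; exact one_ne_zero)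
        have hcl' : c ℓ' = 1 := by rcases zmod2_cases (c ℓ') with h|h; exact absurd h hℓ'; exact h
        have hxl' : x ℓ' = 1 := by simp [hxdef, hcl']
        have hxl : x ℓ = 1 := by simp [hxdef, hcl]
        rw [hxl, ← hxl']
        exact Finset.single_le_sum (fun i _ => hx0 i) hℓ'mem
      · have hxl : x ℓ = 0 := by simp [hxdef, hcl]
        rw [hxl]
        exact Finset.sum_nonneg fun i _ => hx0 i
  haveI : Nonempty (Fin n) := ⟨i0⟩
  have hbddx : BddAbove (Set.range x) := (Set.finite_range x).bddAbove
  have hMx : sSup (Set.range x) = 1 := by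
    apply le_antisymm
    · exact csSup_le (Set.range_nonempty x) (by rintro a ⟨i, rfl⟩; exact hx1 i)
    · exact le_csSup hbddx ⟨i0, hxi0⟩
  have hwA : wAWGNC x = (d:ℝ) := by
    unfold wAWGNC
    rw [hxsum, hxsq, sq]
    field_simp
  have hwM : wMaxFrac x = (d:ℝ) := by
    unfold wMaxFrac
    rw [hxsum, hMx, div_one]
  -- BSC value on x
  have hn : 0 < n := i0.pos
  have hy0' : sortDesc x ⟨0, hn⟩ = 1 := by
    have h1 : sortDesc x ((Tuple.sort (fun j => -x j)).symm i0) = 1 := by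
      simp [sortDesc, hxi0]
    have h2 : sortDesc x ((Tuple.sort (fun j => -x j)).symm i0) ≤ sortDesc x ⟨0, hn⟩ :=
      sortDesc_antitone x (by simp [Fin.le_def])
    have h3 : sortDesc x ⟨0, hn⟩ ≤ 1 := hx1 _
    linarith
  have hwB : wBSC x = (d:ℝ) := by
    have hd2' : (d:ℝ) ≤ 2 := by exact_mod_cast hd
    have hmem : ((d:ℝ)/2) ∈ {ξ : ℝ | bigPhi x (n:ℝ)/2 ≤ bigPhi x ξ} := by
      simp only [Set.mem_setOf_eq, bigPhi_n, hxsum]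
      have hterm : sortDesc x ⟨0, hn⟩ * min 1 (max 0 ((d:ℝ)/2 - ((⟨0, hn⟩ : Fin n):ℝ))) = (d:ℝ)/2 := by
        rw [hy0', one_mul]
        have : ((⟨0, hn⟩ : Fin n) : ℝ) = 0 := by norm_num
        rw [this, sub_zero, max_eq_right (by linarith), min_eq_right (by linarith)]
      calc (d:ℝ)/2 = _ := hterm.symm
        _ ≤ ∑ i, sortDesc x i * min 1 (max 0 ((d:ℝ)/2 - (i:ℝ))) :=
            Finset.single_le_sum
              (f := fun i : Fin n => sortDesc x i * min 1 (max 0 ((d:ℝ)/2 - (i:ℝ))))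
              (fun i _ => mul_nonneg (hx0 _) (clamp_nonneg _ _)) (Finset.mem_univ _)
    have hSpos : 0 < ∑ i, x i := by rw [hxsum]; exact dpos
    have hub : sInf {ξ : ℝ | bigPhi x (n:ℝ)/2 ≤ bigPhi x ξ} ≤ (d:ℝ)/2 :=
      csInf_le ⟨_, bsc_lb x 1 hx1 one_pos hSpos⟩ hmem
    have hlb := bsc_ge x 1 hx1 one_pos hSpos
    rw [hxsum, div_one] at hlb
    have hub2 : wBSC x ≤ (d:ℝ) := by unfold wBSC; linarith
    linarith
  -- lower bounds
  have hd12 : d = 1 ∨ d = 2 := by omega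
  have hkey : ∀ y : Fin n → ℝ, y ∈ fundCone H → ∀ i, (d:ℝ) * y i ≤ ∑ i', y i' := by
    intro y hy i
    have hy0 : ∀ i, 0 ≤ y i := hy.1
    rcases hd12 with h1 | h2
    · rw [h1]; push_cast; rw [one_mul]
      exact Finset.single_le_sum (fun i _ => hy0 i) (Finset.mem_univ i)
    · have hcol : ∃ j, H j i = 1 := by
        by_contra hco; push_neg at hco
        have hz : ∀ j, H j i = 0 := fun j => by
          rcases zmod2_cases (H j i) with h|h; exact h; exact absurd h (hco j)
        have hmem : (Pi.single i 1 : Fin n → ZMod 2) ∈ C := by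
          rw [hH]
          ext j
          simp [Matrix.mulVec, dotProduct, Pi.single_apply, mul_ite, hz]
        have hsne : (Pi.single i 1 : Fin n → ZMod 2) ≠ 0 :=
          Function.ne_iff.mpr ⟨i, by simp⟩
        have hnorm : hammingNorm (Pi.single i 1 : Fin n → ZMod 2) = 1 := by
          simp [hammingNorm, Pi.single_apply, Finset.filter_eq']
        have h1m : 1 ∈ {k | ∃ c ∈ C, c ≠ 0 ∧ hammingNorm c = k} :=
          ⟨Pi.single i 1, hmem, hsne, hnorm⟩
        have := Nat.sInf_le h1m
        rw [← hdS] at this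
        omega
      obtain ⟨j, hji⟩ := hcol
      have hi : i ∈ rowSupp H j := Finset.mem_filter.mpr ⟨Finset.mem_univ i, hji⟩
      have hle := hy.2 j i hi
      have hsub : (rowSupp H j).erase i ⊆ Finset.univ.erase i := fun a ha =>
        Finset.mem_erase.mpr ⟨(Finset.mem_erase.mp ha).1, Finset.mem_univ a⟩
      have hle2 : ∑ i' ∈ (rowSupp H j).erase i, y i' ≤ ∑ i' ∈ Finset.univ.erase i, y i' :=
        Finset.sum_le_sum_of_subset_of_nonneg hsub (fun a _ _ => hy0 a)
      have hval := Finset.sum_erase_add Finset.univ y (Finset.mem_univ i)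
      rw [h2]; push_cast; linarith
  have hlow : ∀ y ∈ fundCone H \ {0},
      (d:ℝ) ≤ wAWGNC y ∧ (d:ℝ) ≤ wBSC y ∧ (d:ℝ) ≤ wMaxFrac y := by
    rintro y ⟨hy, hyne⟩
    rw [Set.mem_singleton_iff] at hyne
    have hy0 : ∀ i, 0 ≤ y i := hy.1
    obtain ⟨i1, hi1⟩ := Function.ne_iff.mp hyne
    have hi1pos : 0 < y i1 := (hy0 i1).lt_of_ne (Ne.symm hi1)
    set M := sSup (Set.range y) with hMdef
    have hbdd : BddAbove (Set.range y) := (Set.finite_range y).bddAbove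
    have hyM : ∀ i, y i ≤ M := fun i => le_csSup hbdd ⟨i, rfl⟩
    have hMpos : 0 < M := lt_of_lt_of_le hi1pos (hyM i1)
    have hSpos : 0 < ∑ i, y i :=
      lt_of_lt_of_le hi1pos (Finset.single_le_sum (fun i _ => hy0 i) (Finset.mem_univ i1))
    have hkM : (d:ℝ) * M ≤ ∑ i, y i := by
      have hM2 : M ≤ (∑ i, y i) / (d:ℝ) := by
        refine csSup_le ⟨y i1, i1, rfl⟩ ?_
        rintro a ⟨i, rfl⟩
        rw [le_div_iff₀ dpos]
        have := hkey y hy i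
        linarith
      rw [le_div_iff₀ dpos] at hM2
      linarith
    refine ⟨?_, ?_, ?_⟩
    · have hsq : ∑ i, y i ^ 2 ≤ M * ∑ i, y i := by
        calc ∑ i, y i ^ 2 ≤ ∑ i, M * y i :=
              Finset.sum_le_sum fun i _ => by nlinarith [hy0 i, hyM i]
          _ = M * ∑ i, y i := by rw [Finset.mul_sum]
      have hsqpos : 0 < ∑ i, y i ^ 2 :=
        lt_of_lt_of_le (by positivity)
          (Finset.single_le_sum (fun i _ => sq_nonneg (y i)) (Finset.mem_univ i1))
      unfold wAWGNC
      rw [le_div_iff₀ hsqpos]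
      nlinarith
    · have hB := bsc_ge y M hyM hMpos hSpos
      have h2 : (d:ℝ) ≤ (∑ i, y i) / M := by rw [le_div_iff₀ hMpos]; linarith
      linarith
    · unfold wMaxFrac
      rw [← hMdef, le_div_iff₀ hMpos]
      linarith
  have hxmem : x ∈ fundCone H \ {0} := ⟨hcone, by rw [Set.mem_singleton_iff]; exact hxne⟩
  have conclude : ∀ w : (Fin n → ℝ) → ℝ, w x = (d:ℝ) →
      (∀ y ∈ fundCone H \ {0}, (d:ℝ) ≤ w y) → minPW w H = ((d:ℝ):EReal) := by
    intro w hwx hlw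
    apply le_antisymm
    · refine sInf_le ⟨x, hxmem, ?_⟩
      show ((w x : ℝ) : EReal) = ((d:ℝ):EReal)
      rw [hwx]
    · refine le_sInf ?_
      rintro b ⟨y, hy, rfl⟩
      exact EReal.coe_le_coe_iff.mpr (hlw y hy)
  exact ⟨conclude _ hwA (fun y hy => (hlow y hy).1),
    conclude _ hwB (fun y hy => (hlow y hy).2.1),
    conclude _ hwM (fun y hy => (hlow y hy).2.2)⟩
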